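/- Let $f_l(t) = \sum_{i=0}^{l} t^i$. For every integer $n \geq 1$ and odd integers $3 \leq p \leq q$, the polynomial $D_n(t) = -f_{2n-2} f_{p-1} f_{q-1} + f_{2n-1} f_{p-2} f_{q-1} + f_{2n-1} f_{p-1} f_{q-2}$ has constant coefficient $1$ and coefficient of $t$ equal to $3$ when $n \geq 2$ (and $4$ when $n = 1$); in particular $D_n(t)$ is never a polynomial with all coefficients in $\{-1, 0, 1\}$. -/

import Mathlib

/-
Only the two lowest coefficients matter: every `f l` has constant term `1`, so the constant term
of each triple product is `1` and its linear coefficient counts the factors of positive degree.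
For `p ≥ 3` and `q ≥ p` all factors have positive degree except possibly `f (2n - 2)`, so the
linear coefficient of `D n p q` is `-3 + 3 + 3 = 3`, or `-2 + 3 + 3 = 4` when `n = 1`; either way it
lies outside `{-1, 0, 1}`.
-/

open Polynomial

noncomputable def f (l : ℕ) : Polynomial ℤ := ∑ i ∈ Finset.range (l + 1), X ^ i

theorem Polynomial.coeff_one_mul_of_coeff_zero_eq_one {R : Type*} [Semiring R] {P Q : R[X]}
    (hP : P.coeff 0 = 1) (hQ : Q.coeff 0 = 1) : (P * Q).coeff 1 = P.coeff 1 + Q.coeff 1 := by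
  rw [mul_coeff_one, hP, hQ, one_mul, mul_one, add_comm]

lemma f_coeff (l k : ℕ) : (f l).coeff k = if k ≤ l then 1 else 0 := by
  simp only [f, finsetSum_coeff, coeff_X_pow, Finset.sum_ite_eq, Finset.mem_range,
    Nat.lt_succ_iff]

lemma f_coeff_zero (l : ℕ) : (f l).coeff 0 = 1 := by
  simp [f_coeff]

lemma f_mul_f_mul_f_coeff_zero (a b c : ℕ) : (f a * f b * f c).coeff 0 = 1 := by
  simp only [mul_coeff_zero, f_coeff_zero, mul_one]

lemma f_mul_f_mul_f_coeff_one (a b c : ℕ) :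
    (f a * f b * f c).coeff 1 = (f a).coeff 1 + (f b).coeff 1 + (f c).coeff 1 := by
  rw [coeff_one_mul_of_coeff_zero_eq_one (by rw [mul_coeff_zero, f_coeff_zero, f_coeff_zero,
    mul_one]) (f_coeff_zero c), coeff_one_mul_of_coeff_zero_eq_one (f_coeff_zero a)
    (f_coeff_zero b)]

noncomputable def D (n p q : ℕ) : ℤ[X] :=
  -(f (2 * n - 2)) * f (p - 1) * f (q - 1)
    + f (2 * n - 1) * f (p - 2) * f (q - 1)
    + f (2 * n - 1) * f (p - 1) * f (q - 2)

lemma D_coeff_zero (n p q : ℕ) : (D n p q).coeff 0 = 1 := by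
  simp only [D, neg_mul, coeff_add, coeff_neg, f_mul_f_mul_f_coeff_zero]
  norm_num

lemma D_coeff_one {n p q : ℕ} (hn : 1 ≤ n) (hp3 : 3 ≤ p) (hpq : p ≤ q) :
    (D n p q).coeff 1 = if n = 1 then 4 else 3 := by
  simp only [D, neg_mul, coeff_add, coeff_neg, f_mul_f_mul_f_coeff_one, f_coeff]
  split_ifs <;> omega

theorem stmt16_general (n p q : ℕ) (hn : 1 ≤ n)
    (hp3 : 3 ≤ p) (hpq : p ≤ q) :
    (-(f (2 * n - 2)) * f (p - 1) * f (q - 1)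
      + f (2 * n - 1) * f (p - 2) * f (q - 1)
      + f (2 * n - 1) * f (p - 1) * f (q - 2)).coeff 0 = 1 ∧
    (2 ≤ n → (-(f (2 * n - 2)) * f (p - 1) * f (q - 1)
      + f (2 * n - 1) * f (p - 2) * f (q - 1)
      + f (2 * n - 1) * f (p - 1) * f (q - 2)).coeff 1 = 3) ∧
    (n = 1 → (-(f (2 * n - 2)) * f (p - 1) * f (q - 1)
      + f (2 * n - 1) * f (p - 2) * f (q - 1)
      + f (2 * n - 1) * f (p - 1) * f (q - 2)).coeff 1 = 4) ∧
    ¬ (∀ k : ℕ, (-(f (2 * n - 2)) * f (p - 1) * f (q - 1)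
      + f (2 * n - 1) * f (p - 2) * f (q - 1)
      + f (2 * n - 1) * f (p - 1) * f (q - 2)).coeff k ∈ ({-1, 0, 1} : Set ℤ)) := by
  change (D n p q).coeff 0 = 1 ∧ (2 ≤ n → (D n p q).coeff 1 = 3) ∧
    (n = 1 → (D n p q).coeff 1 = 4) ∧ ¬ ∀ k, (D n p q).coeff k ∈ ({-1, 0, 1} : Set ℤ)
  have h1 := D_coeff_one hn hp3 hpq
  refine ⟨D_coeff_zero n p q, fun h2 => by rw [h1, if_neg (by omega)],
    fun h => by rw [h1, if_pos h], fun hsmall => ?_⟩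
  have h1mem := hsmall 1
  rw [h1] at h1mem
  split_ifs at h1mem <;> norm_num at h1mem

theorem stmt16 (n p q : ℕ) (hn : 1 ≤ n) (hp : Odd p) (hq : Odd q)
    (hp3 : 3 ≤ p) (hpq : p ≤ q) :
    (-(f (2 * n - 2)) * f (p - 1) * f (q - 1)
      + f (2 * n - 1) * f (p - 2) * f (q - 1)
      + f (2 * n - 1) * f (p - 1) * f (q - 2)).coeff 0 = 1 ∧
    (2 ≤ n → (-(f (2 * n - 2)) * f (p - 1) * f (q - 1)
      + f (2 * n - 1) * f (p - 2) * f (q - 1)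
      + f (2 * n - 1) * f (p - 1) * f (q - 2)).coeff 1 = 3) ∧
    (n = 1 → (-(f (2 * n - 2)) * f (p - 1) * f (q - 1)
      + f (2 * n - 1) * f (p - 2) * f (q - 1)
      + f (2 * n - 1) * f (p - 1) * f (q - 2)).coeff 1 = 4) ∧
    ¬ (∀ k : ℕ, (-(f (2 * n - 2)) * f (p - 1) * f (q - 1)
      + f (2 * n - 1) * f (p - 2) * f (q - 1)
      + f (2 * n - 1) * f (p - 1) * f (q - 2)).coeff k ∈ ({-1, 0, 1} : Set ℤ)) :=
  stmt16_general n p q hn hp3 hpq
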